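/- arXiv:1808.02481 — 4 statements merged into one kernel-verified Lean document; each statement's English description precedes it below -/
import Mathlib

section
/- Let K be a valued field and equip Kⁿ with the topology induced by the valuation (the K-topology). Suppose a dimension function dim on a family of subsets of Kⁿ satisfies: dim E = 0 iff E is finite and nonempty (dim ∅ = -∞), dim(E₁ ∪ E₂) = max(dim E₁, dim E₂), and dim ∂E < dim E for every set E in the family, where ∂E = cl(E) ∖ E is the frontier; assume the family is closed under closure, finite unions, set difference, and intersections. Then every set E in the family is a finite disjoint union of locally closed sets from the family. -/
/-- Let `K` be a valued field and equip `Kⁿ` with the `K`-topology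
induced by the valuation.  Let `𝓕` be a family of subsets of `Kⁿ` closed under topological
closure, finite unions, set difference and intersections, and let `dim` be a dimension
function with values in `{-∞} ∪ ℕ` such that: `dim E = 0` iff `E` is finite and nonempty,
`dim ∅ = -∞`, `dim (E₁ ∪ E₂) = max (dim E₁) (dim E₂)`, and `dim ∂E < dim E` for every
(nonempty) `E` in the family, where `∂E = cl(E) \ E` is the frontier.  Then every set in
`𝓕` is a finite disjoint union of locally closed sets from `𝓕`. -/
theorem stmt6 {K Γ₀ : Type*} [Field K] [LinearOrderedCommGroupWithZero Γ₀]
    [Valued K Γ₀] (n : ℕ)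
    (𝓕 : Set (Set (Fin n → K))) (dim : Set (Fin n → K) → WithBot ℕ)
    (hclosure : ∀ E ∈ 𝓕, closure E ∈ 𝓕)
    (hunion : ∀ E₁ ∈ 𝓕, ∀ E₂ ∈ 𝓕, E₁ ∪ E₂ ∈ 𝓕)
    (hdiff : ∀ E₁ ∈ 𝓕, ∀ E₂ ∈ 𝓕, E₁ \ E₂ ∈ 𝓕)
    (hinter : ∀ E₁ ∈ 𝓕, ∀ E₂ ∈ 𝓕, E₁ ∩ E₂ ∈ 𝓕)
    (hdim0 : ∀ E ∈ 𝓕, (dim E = 0 ↔ E.Finite ∧ E.Nonempty))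
    (hdimbot : dim ∅ = ⊥)
    (hdimmax : ∀ E₁ ∈ 𝓕, ∀ E₂ ∈ 𝓕, dim (E₁ ∪ E₂) = max (dim E₁) (dim E₂))
    (hfrontier : ∀ E ∈ 𝓕, E.Nonempty → dim (closure E \ E) < dim E) :
    ∀ E ∈ 𝓕, ∃ (m : ℕ) (A : Fin m → Set (Fin n → K)),
      (∀ i, A i ∈ 𝓕) ∧ (∀ i, IsLocallyClosed (A i)) ∧
      (∀ i j, i ≠ j → Disjoint (A i) (A j)) ∧ E = ⋃ i, A i := by
  have hmono : ∀ A ∈ 𝓕, ∀ B ∈ 𝓕, A ⊆ B → dim A ≤ dim B := by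
    intro A hA B hB hAB
    have h := hdimmax A hA B hB
    rw [Set.union_eq_self_of_subset_left hAB] at h
    rw [h]; exact le_max_left _ _
  have hbot : ∀ E ∈ 𝓕, E.Nonempty → ⊥ < dim E := fun E hE hne =>
    lt_of_le_of_lt bot_le (hfrontier E hE hne)
  suffices h : ∀ k : ℕ, ∀ E ∈ 𝓕, dim E ≤ (k : WithBot ℕ) →
      ∃ (m : ℕ) (A : Fin m → Set (Fin n → K)),
      (∀ i, A i ∈ 𝓕) ∧ (∀ i, IsLocallyClosed (A i)) ∧
      (∀ i j, i ≠ j → Disjoint (A i) (A j)) ∧ E = ⋃ i, A i by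
    intro E hE
    rcases Set.eq_empty_or_nonempty E with rfl | hne
    · exact ⟨0, Fin.elim0, fun i => i.elim0, fun i => i.elim0, fun i => i.elim0,
        by simp⟩
    · have hne' : dim E ≠ ⊥ := (hbot E hE hne).ne'
      obtain ⟨k, hk⟩ := WithBot.ne_bot_iff_exists.mp hne'
      exact h k E hE hk.ge
  intro k
  induction k using Nat.strong_induction_on with
  | _ k IH =>
  intro E hE hEk
  rcases Set.eq_empty_or_nonempty E with rfl | hne
  · exact ⟨0, Fin.elim0, fun i => i.elim0, fun i => i.elim0, fun i => i.elim0, by simp⟩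
  set B : Set (Fin n → K) := closure E \ E with hBdef
  have hBF : B ∈ 𝓕 := hdiff _ (hclosure E hE) E hE
  set F : Set (Fin n → K) := closure B with hFdef
  set E₀ : Set (Fin n → K) := E \ F with hE₀def
  have hE₀F : E₀ ∈ 𝓕 := hdiff E hE F (hclosure B hBF)
  have hE₀eq : E₀ = Fᶜ ∩ closure E := by
    ext x
    constructor
    · rintro ⟨hx, hxF⟩
      exact ⟨hxF, subset_closure hx⟩
    · rintro ⟨hxF, hxc⟩
      refine ⟨?_, hxF⟩
      by_contra hxE
      exact hxF (subset_closure ⟨hxc, hxE⟩)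
  have hE₀lc : IsLocallyClosed E₀ :=
    ⟨Fᶜ, closure E, isClosed_closure.isOpen_compl, isClosed_closure, hE₀eq⟩
  rcases Set.eq_empty_or_nonempty B with hBe | hBne
  · -- B empty, so F empty, E₀ = E is (locally) closed
    have hEeq : E = E₀ := by
      rw [hE₀def, hFdef, hBe]
      simp
    refine ⟨1, fun _ => E, fun _ => hE, fun _ => hEeq ▸ hE₀lc, ?_,
      (Set.iUnion_const E).symm⟩
    intro i j hij
    exact absurd (Subsingleton.elim i j) hij
  · set R : Set (Fin n → K) := E ∩ F with hRdef
    have hRF : R ∈ 𝓕 := hinter E hE F (hclosure B hBF)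
    have hdimF : dim F = dim B := by
      have hsplit : F = B ∪ (F \ B) := (Set.union_diff_cancel subset_closure).symm
      have h1 : dim (B ∪ (F \ B)) = max (dim B) (dim (F \ B)) :=
        hdimmax B hBF (F \ B) (hdiff F (hclosure B hBF) B hBF)
      rw [hsplit, h1, max_eq_left (hfrontier B hBF hBne).le]
    have hdimR : dim R < dim E := by
      calc dim R ≤ dim F := hmono R hRF F (hclosure B hBF) Set.inter_subset_right
        _ = dim B := hdimF
        _ < dim E := hfrontier E hE hne
    have hEsplit : E = E₀ ∪ R := by
      rw [hE₀def, hRdef, Set.diff_union_inter]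
    rcases Set.eq_empty_or_nonempty R with hRe | hRne
    · have hEeq : E = E₀ := by rw [hEsplit, hRe, Set.union_empty]
      refine ⟨1, fun _ => E, fun _ => hE, fun _ => hEeq ▸ hE₀lc, ?_,
        (Set.iUnion_const E).symm⟩
      intro i j hij
      exact absurd (Subsingleton.elim i j) hij
    · obtain ⟨d, hd⟩ := WithBot.ne_bot_iff_exists.mp (hbot R hRF hRne).ne'
      have hdk : d < k := by
        have : (d : WithBot ℕ) < (k : WithBot ℕ) :=
          hd.trans_lt (lt_of_lt_of_le hdimR hEk)
        exact_mod_cast this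
      obtain ⟨m', A', hA'F, hA'lc, hA'dis, hA'un⟩ := IH d hdk R hRF hd.ge
      refine ⟨m' + 1, Fin.cons E₀ A', ?_, ?_, ?_, ?_⟩
      · intro i
        refine Fin.cases ?_ ?_ i
        · exact hE₀F
        · exact fun i => hA'F i
      · intro i
        refine Fin.cases ?_ ?_ i
        · exact hE₀lc
        · exact fun i => hA'lc i
      · have hdisj0 : ∀ i, Disjoint E₀ (A' i) := by
          intro i
          have hsub : A' i ⊆ F := by
            intro x hx
            have : x ∈ R := hA'un ▸ Set.mem_iUnion.mpr ⟨i, hx⟩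
            exact this.2
          exact Set.disjoint_sdiff_left.mono_right hsub
        intro i j hij
        rcases Fin.eq_zero_or_eq_succ i with rfl | ⟨i', rfl⟩ <;>
          rcases Fin.eq_zero_or_eq_succ j with rfl | ⟨j', rfl⟩
        · exact absurd rfl hij
        · simpa using hdisj0 j'
        · simpa using (hdisj0 i').symm
        · simp only [Fin.cons_succ]
          exact hA'dis i' j' fun h => hij (congrArg Fin.succ h)
      · rw [hEsplit, hA'un]
        ext x
        simp [Fin.exists_fin_succ]
end

section
/- Let X, Y be topological spaces with Y compact (or more generally, suppose the projection π : X × Y → X maps closed sets to closed sets). Let E ⊆ X × Y be locally closed, F = cl(E), ∂E = F ∖ E, and B = π(F) ∖ π(∂E). Then E ∩ (B × Y) = F ∩ (B × Y); in particular E ∩ (B × Y) is closed in B × Y. -/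
/-- Let `X, Y` be topological spaces such that the projection
`π : X × Y → X` maps closed sets to closed sets (e.g. `Y` compact).  Let `E ⊆ X × Y` be
locally closed, `F = cl(E)`, `∂E = F \ E`, and `B = π(F) \ π(∂E)`.  Then
`E ∩ (B × Y) = F ∩ (B × Y)`; in particular `E ∩ (B × Y)` is closed in `B × Y`. -/
theorem stmt7 {X Y : Type*} [TopologicalSpace X] [TopologicalSpace Y]
    (hπ : ∀ C : Set (X × Y), IsClosed C → IsClosed (Prod.fst '' C))
    (E : Set (X × Y)) (hE : IsLocallyClosed E) :
    E ∩ ((Prod.fst '' closure E \ Prod.fst '' (closure E \ E)) ×ˢ (Set.univ : Set Y)) =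
      closure E ∩
        ((Prod.fst '' closure E \ Prod.fst '' (closure E \ E)) ×ˢ (Set.univ : Set Y)) := by
  ext p
  simp only [Set.mem_inter_iff, Set.mem_prod, Set.mem_univ, and_true, Set.mem_diff,
    Set.mem_image]
  constructor
  · rintro ⟨hpE, h⟩
    exact ⟨subset_closure hpE, h⟩
  · rintro ⟨hpF, ⟨h1, h2⟩⟩
    refine ⟨?_, h1, h2⟩
    by_contra hpE
    exact h2 ⟨p, ⟨hpF, hpE⟩, rfl⟩
end

section
/- Let X, Y be topological spaces with E ⊆ X × Y, let π : X × Y → X be the projection, and suppose π maps closed subsets of X × Y that are contained in cl(E) to closed subsets of X. Let a ∈ X be an accumulation point of π(E). If U₁, …, U_r are open subsets of Y and cl(E) ∩ ({a} × Y) ⊆ {a} × (U₁ ∪ ⋯ ∪ U_r), then a is not an accumulation point of π(E ∩ (X × (Y ∖ (U₁ ∪ ⋯ ∪ U_r))))—i.e., after removing the part of E lying over the union of the Uᵢ, the point a ceases to be an accumulation point of the projection. -/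
/-- Let `X, Y` be topological spaces, `E ⊆ X × Y`, and suppose the
projection `π : X × Y → X` maps closed subsets of `X × Y` contained in `cl(E)` to closed
subsets of `X`.  Let `a ∈ X` be an accumulation point of `π(E)`.  If `U₁, …, U_r` are open
subsets of `Y` and `cl(E) ∩ ({a} × Y) ⊆ {a} × (U₁ ∪ ⋯ ∪ U_r)`, then `a` is not an
accumulation point of `π(E ∩ (X × (Y \ (U₁ ∪ ⋯ ∪ U_r))))`. -/
theorem stmt14 {X Y : Type*} [TopologicalSpace X] [TopologicalSpace Y]
    (E : Set (X × Y))
    (hπ : ∀ C : Set (X × Y), C ⊆ closure E → IsClosed C → IsClosed (Prod.fst '' C))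
    (a : X) (ha : a ∈ closure (Prod.fst '' E \ {a}))
    (r : ℕ) (U : Fin r → Set Y) (hU : ∀ i, IsOpen (U i))
    (hfiber : closure E ∩ ({a} ×ˢ (Set.univ : Set Y)) ⊆ ({a} : Set X) ×ˢ (⋃ i, U i)) :
    a ∉ closure (Prod.fst '' (E ∩ (Set.univ : Set X) ×ˢ (⋃ i, U i)ᶜ) \ {a}) := by
  intro hmem
  set C : Set (X × Y) := closure E ∩ (Set.univ : Set X) ×ˢ (⋃ i, U i)ᶜ with hC
  have hCsub : C ⊆ closure E := Set.inter_subset_left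
  have hCclosed : IsClosed C :=
    isClosed_closure.inter (isClosed_univ.prod ((isOpen_iUnion hU).isClosed_compl))
  have hπC : IsClosed (Prod.fst '' C) := hπ C hCsub hCclosed
  have hsub : Prod.fst '' (E ∩ (Set.univ : Set X) ×ˢ (⋃ i, U i)ᶜ) \ {a} ⊆ Prod.fst '' C := by
    rintro x ⟨⟨p, hp, rfl⟩, -⟩
    exact ⟨p, ⟨subset_closure hp.1, hp.2⟩, rfl⟩
  have : a ∈ Prod.fst '' C := by
    have := closure_mono hsub hmem
    rwa [hπC.closure_eq] at this
  obtain ⟨⟨x, y⟩, ⟨hcl, -, hy⟩, rfl⟩ := this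
  exact hy (hfiber ⟨hcl, rfl, trivial⟩).2
end

section
/- Let K be a field complete with respect to a nontrivial non-Archimedean absolute value, and let Q(t, Z) = Σᵢ bᵢ(t) Zⁱ be a polynomial in Z whose coefficients bᵢ(t) are power series in t converging on a neighborhood of 0 in K, with values in K°. If |Q(0,1)| < 1 and |∂Q/∂Z (0,1)| = 1, then there exists a neighborhood V of 0 and a map Z : V → K° given by a convergent power series such that Q(t, Z(t)) = 0 and |Z(t) − 1| < 1 for all t ∈ V. -/
/-!
At `t = 0`, the ultrametric inequality makes Newton's map `z ↦ z - Q(0,z) / Q'(0,1)` a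
contraction of the closed ball of radius `‖Q(0,1)‖ < 1` about `1`, so Hensel's lemma gives an
exact root `z₀` of `Q(0,·)` with `‖z₀ - 1‖ < 1`. The derivative `Q'(0,z₀)` is still a unit, so
the analytic implicit function theorem (the local inverse of the analytic map
`(t, z) ↦ (Q(t,z), t)` is analytic) deforms `z₀` into an analytic root `Z(t)`. On a small closed
disc its Taylor series converges and `Z(t)` stays within distance `< 1` of `z₀`, hence of `1`.
-/

open Filter Topology Metric Finset IsUltrametricDist

section UnitBall

variable {K : Type*} [NormedField K] [IsUltrametricDist K]

lemma norm_le_one_of_norm_sub_one_le_one {z : K} (h : ‖z - 1‖ ≤ 1) : ‖z‖ ≤ 1 := by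
  simpa using (norm_add_le_max (z - 1) 1).trans (max_le h norm_one.le)

lemma norm_mul_sub_one_le {x y : K} (hx : ‖x‖ ≤ 1) : ‖x * y - 1‖ ≤ max ‖x - 1‖ ‖y - 1‖ := by
  have hxy : ‖x * (y - 1)‖ ≤ ‖y - 1‖ := by
    rw [norm_mul]; exact mul_le_of_le_one_left (norm_nonneg _) hx
  calc ‖x * y - 1‖ = ‖x * (y - 1) + (x - 1)‖ := by ring_nf
    _ ≤ max ‖y - 1‖ ‖x - 1‖ := (norm_add_le_max _ _).trans (max_le_max hxy le_rfl)
    _ = max ‖x - 1‖ ‖y - 1‖ := max_comm _ _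

lemma norm_pow_sub_one_le {z : K} (hz : ‖z‖ ≤ 1) (n : ℕ) : ‖z ^ n - 1‖ ≤ ‖z - 1‖ := by
  induction n with
  | zero => simp
  | succ n ih => rw [pow_succ']; exact (norm_mul_sub_one_le hz).trans (max_le le_rfl ih)

lemma norm_pow_mul_pow_sub_one_le {z w : K} (hz : ‖z‖ ≤ 1) (hw : ‖w‖ ≤ 1) (j k : ℕ) :
    ‖z ^ j * w ^ k - 1‖ ≤ max ‖z - 1‖ ‖w - 1‖ :=
  (norm_mul_sub_one_le (by rw [norm_pow]; exact pow_le_one₀ (norm_nonneg _) hz)).trans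
    (max_le_max (norm_pow_sub_one_le hz j) (norm_pow_sub_one_le hw k))

lemma norm_natCast_sub_geom_sum₂_le {z w : K} (hz : ‖z‖ ≤ 1) (hw : ‖w‖ ≤ 1) (n : ℕ) :
    ‖(n : K) - ∑ j ∈ range n, z ^ j * w ^ (n - 1 - j)‖ ≤ max ‖z - 1‖ ‖w - 1‖ := by
  have h : (n : K) - ∑ j ∈ range n, z ^ j * w ^ (n - 1 - j)
      = ∑ j ∈ range n, -(z ^ j * w ^ (n - 1 - j) - 1) := by
    simp [sum_sub_distrib]
  rw [h]
  refine norm_sum_le_of_forall_le_of_nonneg ((norm_nonneg _).trans (le_max_left _ _))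
    fun j _ => ?_
  rw [norm_neg]
  exact norm_pow_mul_pow_sub_one_le hz hw _ _

variable {ι : Type*} (s : Finset ι) (a : ι → K) (e : ι → ℕ)

lemma norm_sum_mul_pow_sub_sum_le (ha : ∀ i ∈ s, ‖a i‖ ≤ 1) {z : K} (hz : ‖z‖ ≤ 1) :
    ‖∑ i ∈ s, a i * z ^ e i - ∑ i ∈ s, a i‖ ≤ ‖z - 1‖ := by
  rw [← sum_sub_distrib]
  refine norm_sum_le_of_forall_le_of_nonneg (norm_nonneg _) fun i hi => ?_
  rw [← mul_sub_one, norm_mul]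
  exact (mul_le_of_le_one_left (norm_nonneg _) (ha i hi)).trans (norm_pow_sub_one_le hz _)

lemma norm_sum_mul_pow_sub_sum_mul_pow_sub_mul_le (ha : ∀ i ∈ s, ‖a i‖ ≤ 1) {z w : K}
    (hz : ‖z‖ ≤ 1) (hw : ‖w‖ ≤ 1) :
    ‖∑ i ∈ s, a i * z ^ e i - ∑ i ∈ s, a i * w ^ e i - (∑ i ∈ s, (e i : K) * a i) * (z - w)‖
      ≤ max ‖z - 1‖ ‖w - 1‖ * ‖z - w‖ := by
  have h : ∑ i ∈ s, a i * z ^ e i - ∑ i ∈ s, a i * w ^ e i - (∑ i ∈ s, (e i : K) * a i) * (z - w)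
      = -((z - w) * ∑ i ∈ s, a i * ((e i : K) - ∑ j ∈ range (e i), z ^ j * w ^ (e i - 1 - j))) := by
    simp only [mul_sum, sum_mul, ← sum_sub_distrib, ← sum_neg_distrib]
    refine sum_congr rfl fun i _ => ?_
    linear_combination -a i * geom_sum₂_mul z w (e i)
  rw [h, norm_neg, norm_mul, mul_comm]
  gcongr
  refine norm_sum_le_of_forall_le_of_nonneg ((norm_nonneg _).trans (le_max_left _ _))
    fun i hi => ?_
  rw [norm_mul]
  exact (mul_le_of_le_one_left (norm_nonneg _) (ha i hi)).trans
    (norm_natCast_sub_geom_sum₂_le hz hw _)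

end UnitBall

section Hensel

variable {K : Type*} [NormedField K] [IsUltrametricDist K] [CompleteSpace K]

/-- Newton's method `z ↦ z - g z / u` contracts `closedBall x ρ` into itself. -/
theorem exists_mem_closedBall_eq_zero_of_norm_sub_sub_mul_le {g : K → K} {x u : K} {ρ : ℝ}
    {κ : NNReal} (hκ : κ < 1) (hu : u ≠ 0) (hx : ‖g x‖ ≤ ρ * ‖u‖)
    (hg : ∀ z ∈ closedBall x ρ, ∀ w ∈ closedBall x ρ,
      ‖g z - g w - u * (z - w)‖ ≤ κ * ‖u‖ * ‖z - w‖) :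
    ∃ z ∈ closedBall x ρ, g z = 0 := by
  set N : K → K := fun z => z - g z / u
  have hu' : 0 < ‖u‖ := norm_pos_iff.2 hu
  have hρ : 0 ≤ ρ := nonneg_of_mul_nonneg_left ((norm_nonneg _).trans hx) hu'
  have hx_mem : x ∈ closedBall x ρ := mem_closedBall_self hρ
  have hN : ∀ z ∈ closedBall x ρ, ∀ w ∈ closedBall x ρ, ‖N z - N w‖ ≤ κ * ‖z - w‖ := by
    intro z hz w hw
    have h : N z - N w = -((g z - g w - u * (z - w)) / u) := by
      simp only [N]; field_simp; ring
    rw [h, norm_neg, norm_div, div_le_iff₀ hu']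
    linarith [hg z hz w hw]
  have hNx : ‖N x - x‖ ≤ ρ := by
    simp only [N, sub_sub_cancel_left, norm_neg, norm_div]
    exact (div_le_iff₀ hu').2 hx
  have hmaps : Set.MapsTo N (closedBall x ρ) (closedBall x ρ) := by
    intro z hz
    rw [mem_closedBall, dist_eq_norm]
    have hza : κ * ‖z - x‖ ≤ ρ := by
      rw [mem_closedBall, dist_eq_norm] at hz
      nlinarith [norm_nonneg (z - x), κ.2]
    calc ‖N z - x‖ = ‖(N z - N x) + (N x - x)‖ := by rw [sub_add_sub_cancel]
      _ ≤ max ‖N z - N x‖ ‖N x - x‖ := norm_add_le_max _ _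
      _ ≤ ρ := max_le ((hN z hz x hx_mem).trans hza) hNx
  have hcontr : ContractingWith κ (hmaps.restrict N _ _) :=
    ⟨hκ, LipschitzWith.of_dist_le_mul fun z w => by
      simpa [Subtype.dist_eq, dist_eq_norm] using hN z z.2 w w.2⟩
  obtain ⟨z, hz, hfix, -⟩ :=
    hcontr.exists_fixedPoint' isClosed_closedBall.isComplete hmaps hx_mem (edist_ne_top _ _)
  refine ⟨z, hz, ?_⟩
  have : g z / u = 0 := sub_eq_self.1 hfix
  simpa [hu] using this

variable {ι : Type*} (s : Finset ι) (a : ι → K) (e : ι → ℕ)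

theorem exists_sum_mul_pow_eq_zero_of_norm_sum_lt_one (ha : ∀ i ∈ s, ‖a i‖ ≤ 1)
    (h₀ : ‖∑ i ∈ s, a i‖ < 1) (h₁ : ‖∑ i ∈ s, (e i : K) * a i‖ = 1) :
    ∃ z, ∑ i ∈ s, a i * z ^ e i = 0 ∧ ‖z - 1‖ ≤ ‖∑ i ∈ s, a i‖ := by
  have hu : ∑ i ∈ s, (e i : K) * a i ≠ 0 := norm_ne_zero_iff.1 (h₁.trans_ne one_ne_zero)
  have hg : ∀ z ∈ closedBall (1 : K) ‖∑ i ∈ s, a i‖, ∀ w ∈ closedBall (1 : K) ‖∑ i ∈ s, a i‖,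
      ‖∑ i ∈ s, a i * z ^ e i - ∑ i ∈ s, a i * w ^ e i - (∑ i ∈ s, (e i : K) * a i) * (z - w)‖
        ≤ ‖∑ i ∈ s, a i‖₊ * ‖∑ i ∈ s, (e i : K) * a i‖ * ‖z - w‖ := by
    intro z hz w hw
    rw [mem_closedBall, dist_eq_norm] at hz hw
    rw [h₁, mul_one, coe_nnnorm]
    exact (norm_sum_mul_pow_sub_sum_mul_pow_sub_mul_le s a e ha
      (norm_le_one_of_norm_sub_one_le_one (hz.trans h₀.le))
      (norm_le_one_of_norm_sub_one_le_one (hw.trans h₀.le))).trans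
      (mul_le_mul_of_nonneg_right (max_le hz hw) (norm_nonneg _))
  obtain ⟨z, hz, hz₀⟩ := exists_mem_closedBall_eq_zero_of_norm_sub_sub_mul_le
    (g := fun z => ∑ i ∈ s, a i * z ^ e i) h₀ hu (by simp [h₁]) hg
  exact ⟨z, hz₀, by rwa [mem_closedBall, dist_eq_norm] at hz⟩

end Hensel

section Analytic

variable {𝕜 : Type*} [NontriviallyNormedField 𝕜]

lemma analyticAt_zero_of_forall_norm_le_hasSum {b : PowerSeries 𝕜} {f : 𝕜 → 𝕜} {r : ℝ}
    (hr : 0 < r) (hf : ∀ t : 𝕜, ‖t‖ ≤ r → HasSum (fun n => PowerSeries.coeff n b * t ^ n) (f t)) :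
    AnalyticAt 𝕜 f 0 := by
  obtain ⟨x, hx₀, hxr⟩ := NormedField.exists_norm_lt 𝕜 hr
  set p := FormalMultilinearSeries.ofScalars 𝕜 fun n => PowerSeries.coeff n b
  have hp : ∀ t n, p n (fun _ => t) = PowerSeries.coeff n b * t ^ n := fun t n => by
    rw [FormalMultilinearSeries.ofScalars_apply_eq, smul_eq_mul]
  have hradius : (‖x‖₊ : ENNReal) ≤ p.radius := by
    refine p.le_radius_of_tendsto (l := 0) ?_
    simpa [p, FormalMultilinearSeries.ofScalars_norm] using
      (hf x hxr.le).summable.tendsto_atTop_zero.norm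
  refine ⟨p, ‖x‖₊, hradius, by simpa using hx₀, fun {t} ht => ?_⟩
  have ht' : ‖t‖ < ‖x‖ := by simpa using ht
  simpa [hp] using hf t (ht'.trans hxr).le

lemma HasFPowerSeriesAt.eventually_hasSum_coeff_mul_pow {f : 𝕜 → 𝕜}
    {p : FormalMultilinearSeries 𝕜 𝕜 𝕜} (hf : HasFPowerSeriesAt f p 0) :
    ∀ᶠ t in 𝓝 0, HasSum (fun n => p.coeff n * t ^ n) (f t) := by
  filter_upwards [hf.eventually_hasSum] with t ht
  simpa [FormalMultilinearSeries.apply_eq_pow_smul_coeff, mul_comm] using ht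

lemma hasDerivAt_sum_mul_pow {ι : Type*} (s : Finset ι) (a : ι → 𝕜) (e : ι → ℕ) (z : 𝕜) :
    HasDerivAt (fun z => ∑ i ∈ s, a i * z ^ e i) (∑ i ∈ s, (e i : 𝕜) * a i * z ^ (e i - 1)) z := by
  refine HasDerivAt.fun_sum fun i _ => ?_
  rw [mul_comm (e i : 𝕜), mul_assoc]
  exact (hasDerivAt_pow (e i) z).const_mul (a i)

variable {E₁ : Type*} [NormedAddCommGroup E₁] [NormedSpace 𝕜 E₁] [CompleteSpace E₁]
  {E₂ : Type*} [NormedAddCommGroup E₂] [NormedSpace 𝕜 E₂] [CompleteSpace E₂]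
  {F : Type*} [NormedAddCommGroup F] [NormedSpace 𝕜 F] [CompleteSpace F]

theorem HasStrictFDerivAt.analyticAt_implicitFunctionOfProdDomain {f : E₁ × E₂ → F}
    {f' : E₁ × E₂ →L[𝕜] F} {u : E₁ × E₂} (hf' : HasStrictFDerivAt f f' u)
    (hf'₂ : (f' ∘L .inr 𝕜 E₁ E₂).IsInvertible) (hf : AnalyticAt 𝕜 f u) :
    AnalyticAt 𝕜 (hf'.implicitFunctionOfProdDomain hf'₂) u.1 := by
  set φ := hf'.implicitFunctionDataOfProdDomain hf'₂
  have hφ : AnalyticAt 𝕜 φ.toOpenPartialHomeomorph.symm (f u, u.1) :=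
    φ.toOpenPartialHomeomorph.analyticAt_symm' φ.pt_mem_toOpenPartialHomeomorph_source
      (hf.prod analyticAt_fst) φ.hasStrictFDerivAt.hasFDerivAt.fderiv
  exact analyticAt_snd.comp (hφ.comp (analyticAt_const.prod analyticAt_id))

theorem AnalyticAt.exists_analyticAt_eventually_eq_zero [CompleteSpace 𝕜] {f : E₁ × 𝕜 → 𝕜}
    {t₀ : E₁} {z₀ c : 𝕜} (hf : AnalyticAt 𝕜 f (t₀, z₀)) (hf₀ : f (t₀, z₀) = 0)
    (hc : HasDerivAt (fun z => f (t₀, z)) c z₀) (hc₀ : c ≠ 0) :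
    ∃ Z : E₁ → 𝕜, AnalyticAt 𝕜 Z t₀ ∧ Tendsto Z (𝓝 t₀) (𝓝 z₀) ∧
      ∀ᶠ t in 𝓝 t₀, f (t, Z t) = 0 := by
  have hf' := hf.hasStrictFDerivAt
  have hf'₂ : (fderiv 𝕜 f (t₀, z₀) ∘L .inr 𝕜 E₁ 𝕜).IsInvertible := by
    refine ⟨.unitsEquivAut 𝕜 (.mk0 c hc₀), ContinuousLinearMap.ext_ring ?_⟩
    have h := hf.differentiableAt.hasFDerivAt.comp z₀ (hasFDerivAt_prodMk_right t₀ z₀)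
    rw [← hc.hasFDerivAt.unique h]
    simp
  refine ⟨_, hf'.analyticAt_implicitFunctionOfProdDomain hf'₂ hf,
    hf'.tendsto_implicitFunctionOfProdDomain hf'₂, ?_⟩
  simpa [hf₀] using hf'.eventually_apply_implicitFunctionOfProdDomain hf'₂

end Analytic

/-- Let `K` be a field complete with respect to a nontrivial
non-Archimedean absolute value, and let `Q(t, Z) = Σᵢ bᵢ(t) Zⁱ` be a polynomial in `Z`
whose coefficients `bᵢ(t)` are power series in `t` converging on a neighborhood of `0`
in `K` with values in the closed unit ball `K°`.  If `|Q(0,1)| < 1` and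
`|∂Q/∂Z (0,1)| = 1`, then there exist a neighborhood `V = {‖t‖ ≤ ρ}` of `0` and a map
`Z : V → K°` given by a convergent power series such that `Q(t, Z(t)) = 0` and
`|Z(t) − 1| < 1` for all `t ∈ V`. -/
theorem stmt17 {K : Type*} [NontriviallyNormedField K] [IsUltrametricDist K]
    [CompleteSpace K] (m : ℕ) (b : Fin (m + 1) → PowerSeries K)
    (r : ℝ) (hr : 0 < r) (B : Fin (m + 1) → K → K)
    (hB : ∀ i, ∀ t : K, ‖t‖ ≤ r →
      HasSum (fun n : ℕ => PowerSeries.coeff n (b i) * t ^ n) (B i t))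
    (hBval : ∀ i, ∀ t : K, ‖t‖ ≤ r → ‖B i t‖ ≤ 1) :
    let Q : K → K → K := fun t z => ∑ i : Fin (m + 1), B i t * z ^ (i : ℕ)
    let Q' : K → K → K := fun t z =>
      ∑ i : Fin (m + 1), ((i : ℕ) : K) * B i t * z ^ ((i : ℕ) - 1)
    ‖Q 0 1‖ < 1 → ‖Q' 0 1‖ = 1 →
      ∃ (Zs : PowerSeries K) (ρ : ℝ), 0 < ρ ∧ ∀ t : K, ‖t‖ ≤ ρ →
        ∃ z : K, HasSum (fun n : ℕ => PowerSeries.coeff n Zs * t ^ n) z ∧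
          Q t z = 0 ∧ ‖z - 1‖ < 1 ∧ ‖z‖ ≤ 1 := by
  intro Q Q' hQ hQ'
  have hB₀ : ∀ i ∈ univ, ‖B i 0‖ ≤ 1 := fun i _ => hBval i 0 (by simpa using hr.le)
  have hQ₀ : ‖∑ i, B i 0‖ < 1 := by simpa [Q] using hQ
  have hQ'₀ : ‖∑ i : Fin (m + 1), ((i : ℕ) : K) * B i 0‖ = 1 := by simpa [Q'] using hQ'
  obtain ⟨z₀, hz₀, hz₀1⟩ :=
    exists_sum_mul_pow_eq_zero_of_norm_sum_lt_one univ (B · 0) Fin.val hB₀ hQ₀ hQ'₀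
  replace hz₀1 : ‖z₀ - 1‖ < 1 := hz₀1.trans_lt hQ₀
  have hQ'z₀ : Q' 0 z₀ ≠ 0 := by
    intro h
    have hclose := norm_sum_mul_pow_sub_sum_le univ
      (fun i : Fin (m + 1) => ((i : ℕ) : K) * B i 0) (fun i => (i : ℕ) - 1) (fun i hi => by
        simpa [norm_mul] using mul_le_one₀ (norm_natCast_le_one K i) (norm_nonneg _) (hB₀ i hi))
      (norm_le_one_of_norm_sub_one_le_one hz₀1.le)
    simp only [Q'] at h
    rw [h, zero_sub, norm_neg, hQ'₀] at hclose
    exact hz₀1.not_ge hclose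
  have hBan i : AnalyticAt K (B i) 0 := analyticAt_zero_of_forall_norm_le_hasSum hr (hB i)
  have hQan : AnalyticAt K (fun p : K × K => Q p.1 p.2) (0, z₀) :=
    Finset.analyticAt_fun_sum _ fun i _ =>
      ((hBan i).comp (f := Prod.fst) analyticAt_fst).mul (analyticAt_snd.pow _)
  obtain ⟨Z, ⟨p, hp⟩, hZz₀, hQZ⟩ := hQan.exists_analyticAt_eventually_eq_zero hz₀
    (hasDerivAt_sum_mul_pow univ (B · 0) Fin.val z₀) hQ'z₀
  have hZ1 : ∀ᶠ t in 𝓝 0, Z t ∈ ball 1 1 := by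
    filter_upwards [hZz₀ (ball_mem_nhds z₀ one_pos)] with t ht
    exact (IsUltrametricDist.dist_triangle_max _ z₀ _).trans_lt
      (max_lt ht (mem_ball_iff_norm.2 hz₀1))
  obtain ⟨ρ, hρ, hall⟩ := nhds_basis_closedBall.eventually_iff.1
    (hp.eventually_hasSum_coeff_mul_pow.and (hQZ.and hZ1))
  refine ⟨.mk p.coeff, ρ, hρ, fun t ht => ?_⟩
  obtain ⟨hsum, hroot, hnear⟩ := hall (by simpa using ht)
  rw [mem_ball_iff_norm] at hnear
  exact ⟨Z t, by simpa using hsum, hroot, hnear, norm_le_one_of_norm_sub_one_le_one hnear.le⟩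
end
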